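/- (Sundman–Weierstrass total collapse theorem) Consider a solution of the Newtonian N-body problem (N ≥ 2) on [t₀, t*) in the center-of-mass frame (Σ_j m_j r_j(t) = 0 for all t), with positions pairwise distinct at every time, and suppose total collapse occurs at time t*: all positions r_j(t) converge to a common point p ∈ ℝ³ as t → t*⁻. Then the (constant) total angular momentum vanishes: c = Σ_j m_j r_j(t) × v_j(t) = 0. -/

import Mathlib

/-!
Sundman's argument. Collapse forces the collision point to be the centre of mass, hence the
origin, so the moment of inertia `I = ∑ mⱼ ‖rⱼ‖²` tends to `0` while the force function `U`
tends to `+∞`. With the conserved energy `E` and angular momentum `c`, the Lagrange–Jacobi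
identity reads `Ï = W + 2E`, where `W = ∑ mⱼ ‖vⱼ‖²` and Cauchy–Schwarz gives Sundman's inequality
`‖c‖² ≤ I W`. Near the collapse `Ï ≥ 0`, so `I` is convex there and, tending to `0`, decreasing.
If `c ≠ 0`, then `İ ² / 2 - 2 E I - ‖c‖² log I` has derivative `İ (W - ‖c‖² / I) ≤ 0`, yet it tends
to `+∞` as `I → 0`.
-/

/-- The cross product on `ℝ³`, viewed as `EuclideanSpace ℝ (Fin 3)`. -/
noncomputable def cross (u v : EuclideanSpace ℝ (Fin 3)) : EuclideanSpace ℝ (Fin 3) :=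
  (WithLp.equiv 2 (Fin 3 → ℝ)).symm
    (crossProduct ((WithLp.equiv 2 (Fin 3 → ℝ)) u) ((WithLp.equiv 2 (Fin 3 → ℝ)) v))

open Filter Set Topology Finset
open scoped RealInnerProductSpace

local notation "ℝ³" => EuclideanSpace ℝ (Fin 3)

noncomputable def crossCLM : ℝ³ →L[ℝ] ℝ³ →L[ℝ] ℝ³ :=
  LinearMap.toContinuousLinearMap <| LinearMap.toContinuousLinearMap.toLinearMap ∘ₗ
    ((crossProduct.compl₁₂ (WithLp.linearEquiv 2 ℝ (Fin 3 → ℝ)).toLinearMap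
      (WithLp.linearEquiv 2 ℝ (Fin 3 → ℝ)).toLinearMap).compr₂
        (WithLp.linearEquiv 2 ℝ (Fin 3 → ℝ)).symm.toLinearMap)

@[simp] theorem crossCLM_apply (u v : ℝ³) : crossCLM u v = cross u v := rfl

theorem cross_self_eq_zero (u : ℝ³) : cross u u = 0 := by
  simp [cross, cross_self]

theorem cross_add_cross_swap (u v : ℝ³) : cross u v + cross v u = 0 := by
  rw [cross, cross, WithLp.equiv_symm_apply, ← WithLp.toLp_add, cross_anticomm']; rfl

theorem norm_cross_le (u v : ℝ³) : ‖cross u v‖ ≤ ‖u‖ * ‖v‖ := by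
  have norm_sq (x : ℝ³) : ‖x‖ ^ 2 = x 0 ^ 2 + x 1 ^ 2 + x 2 ^ 2 := by
    rw [EuclideanSpace.norm_eq, Real.sq_sqrt (by positivity)]
    simp [Fin.sum_univ_three, sq_abs]
  refine (sq_le_sq₀ (norm_nonneg _) (by positivity)).1 ?_
  rw [mul_pow, norm_sq, norm_sq, norm_sq]
  change (u 1 * v 2 - u 2 * v 1) ^ 2 + (u 2 * v 0 - u 0 * v 2) ^ 2 + (u 0 * v 1 - u 1 * v 0) ^ 2
    ≤ _
  nlinarith [sq_nonneg (u 0 * v 0 + u 1 * v 1 + u 2 * v 2)]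

theorem HasDerivWithinAt.cross {f g : ℝ → ℝ³} {f' g' : ℝ³} {s : Set ℝ} {t : ℝ}
    (hf : HasDerivWithinAt f f' s t) (hg : HasDerivWithinAt g g' s t) :
    HasDerivWithinAt (fun t => _root_.cross (f t) (g t))
      (_root_.cross f' (g t) + _root_.cross (f t) g') s t :=
  (crossCLM.hasFDerivAt.comp_hasDerivWithinAt t hf).clm_apply hg

theorem HasDerivWithinAt.inv_norm {E : Type*} [NormedAddCommGroup E] [InnerProductSpace ℝ E]
    {f : ℝ → E} {f' : E} {s : Set ℝ} {t : ℝ} (hf : HasDerivWithinAt f f' s t) (h0 : f t ≠ 0) :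
    HasDerivWithinAt (fun t => ‖f t‖⁻¹) (-⟪f t, f'⟫ / ‖f t‖ ^ 3) s t := by
  have hn : ‖f t‖ ≠ 0 := norm_ne_zero_iff.2 h0
  have hnorm : HasDerivWithinAt (fun t => ‖f t‖) (⟪f t, f'⟫ / ‖f t‖) s t := by
    have h := hf.norm_sq.sqrt (pow_ne_zero 2 hn)
    simp only [Real.sqrt_sq (norm_nonneg _)] at h
    exact h.congr_deriv (by field_simp)
  exact (hnorm.fun_inv hn).congr_deriv (by field_simp)

theorem Convex.is_const_of_hasDerivWithinAt_zero {F : Type*} [NormedAddCommGroup F]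
    [NormedSpace ℝ F] {f : ℝ → F} {s : Set ℝ} (hs : Convex ℝ s)
    (hf : ∀ t ∈ s, HasDerivWithinAt f 0 s t) {x y : ℝ} (hx : x ∈ s) (hy : y ∈ s) :
    f x = f y := by
  simpa [sub_eq_zero, eq_comm] using
    hs.norm_image_sub_le_of_norm_hasDerivWithin_le hf (fun _ _ => norm_zero.le) hx hy

theorem Finset.sum_sum_erase_eq_half_sum_add_swap {ι M : Type*} [Fintype ι] [DecidableEq ι]
    [AddCommGroup M] [Module ℝ M] (f : ι → ι → M) :
    ∑ j, ∑ k ∈ univ.erase j, f j k = (2 : ℝ)⁻¹ • ∑ j, ∑ k ∈ univ.erase j, (f j k + f k j) := by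
  have hswap : ∑ j, ∑ k ∈ univ.erase j, f k j = ∑ j, ∑ k ∈ univ.erase j, f j k :=
    sum_comm' (by simp [ne_comm])
  simp only [sum_add_distrib, hswap, ← two_smul ℝ, smul_smul]
  norm_num

theorem le_zero_of_hasDerivAt_of_monotoneOn_of_tendsto_zero {I J : ℝ → ℝ} {a b : ℝ}
    (hI : ∀ t ∈ Ioo a b, HasDerivAt I (J t) t) (hJ : MonotoneOn J (Ioo a b))
    (hpos : ∀ t ∈ Ioo a b, 0 < I t) (hlim : Tendsto I (𝓝[<] b) (𝓝 0)) :
    ∀ t ∈ Ioo a b, J t ≤ 0 := by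
  intro s hs
  by_contra! hJs
  have hsub : Ico s b ⊆ Ioo a b := fun x hx => ⟨hs.1.trans_le hx.1, hx.2⟩
  have hmono : MonotoneOn I (Ico s b) := by
    refine monotoneOn_of_hasDerivWithinAt_nonneg (f' := J) (convex_Ico s b)
      (fun x hx => (hI x (hsub hx)).continuousAt.continuousWithinAt) (fun x hx => ?_)
      (fun x hx => ?_) <;> rw [interior_Ico] at hx
    · exact (hI x (hsub (Set.Ioo_subset_Ico_self hx))).hasDerivWithinAt
    · exact hJs.le.trans (hJ hs (hsub (Set.Ioo_subset_Ico_self hx)) hx.1.le)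
  have hle : I s ≤ 0 := ge_of_tendsto hlim <| by
    filter_upwards [Ioo_mem_nhdsLT hs.2] with x hx
    exact hmono (left_mem_Ico.2 hs.2) (Set.Ioo_subset_Ico_self hx) hx.1.le
  exact (hpos s hs).not_ge hle

theorem tendsto_sundman_atTop {α : Type*} {l : Filter α} {I J : α → ℝ} {E c : ℝ} (hc : 0 < c)
    (hI : Tendsto I l (𝓝[>] 0)) :
    Tendsto (fun t => J t ^ 2 / 2 - 2 * E * I t - c * Real.log (I t)) l atTop := by
  have hlog : Tendsto (fun t => -(c * Real.log (I t))) l atTop :=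
    tendsto_neg_atBot_atTop.comp ((Real.tendsto_log_nhdsGT_zero.comp hI).const_mul_atBot hc)
  have hlin : Tendsto (fun t => -(2 * E * I t)) l (𝓝 (-(2 * E * 0))) :=
    ((hI.mono_right nhdsWithin_le_nhds).const_mul _).neg
  refine tendsto_atTop_mono (fun t => ?_) (hlin.add_atTop hlog)
  nlinarith [sq_nonneg (J t)]

theorem le_zero_of_lagrangeJacobi_of_tendsto_zero {I J W : ℝ → ℝ} {E c a b : ℝ} (hab : a < b)
    (hI : ∀ t ∈ Ioo a b, HasDerivAt I (J t) t) (hJ : ∀ t ∈ Ioo a b, HasDerivAt J (W t + 2 * E) t)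
    (hpos : ∀ t ∈ Ioo a b, 0 < I t) (hc : ∀ t ∈ Ioo a b, c ≤ I t * W t)
    (hIlim : Tendsto I (𝓝[<] b) (𝓝 0)) (hWlim : Tendsto W (𝓝[<] b) atTop) : c ≤ 0 := by
  by_contra! hc0
  obtain ⟨l, hlb, hl⟩ := mem_nhdsLT_iff_exists_Ioo_subset.1
    ((eventually_mem_set.2 (Ioo_mem_nhdsLT hab)).and (hWlim.eventually_ge_atTop (-(2 * E))))
  have hsub : Ioo l b ⊆ Ioo a b := fun t ht => (hl ht).1
  have hJmono : MonotoneOn J (Ioo l b) := by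
    refine monotoneOn_of_hasDerivWithinAt_nonneg (f' := (W · + 2 * E)) (convex_Ioo l b)
      (fun t ht => (hJ t (hsub ht)).continuousAt.continuousWithinAt) (fun t ht => ?_)
      (fun t ht => ?_) <;> rw [interior_Ioo] at ht
    · exact (hJ t (hsub ht)).hasDerivWithinAt
    · linarith [(hl ht).2]
  have hJneg := le_zero_of_hasDerivAt_of_monotoneOn_of_tendsto_zero (fun t ht => hI t (hsub ht))
    hJmono (fun t ht => hpos t (hsub ht)) hIlim
  set g := fun t => J t ^ 2 / 2 - 2 * E * I t - c * Real.log (I t)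
  have hg : ∀ t ∈ Ioo l b, HasDerivAt g (J t * (W t - c / I t)) t := fun t ht => by
    have hIt := hI t (hsub ht)
    refine ((((hJ t (hsub ht)).pow 2).div_const 2).sub (hIt.const_mul (2 * E))).sub
      ((hIt.log (hpos t (hsub ht)).ne').const_mul c) |>.congr_deriv ?_
    field_simp
    ring
  have hganti : AntitoneOn g (Ioo l b) := by
    refine antitoneOn_of_hasDerivWithinAt_nonpos (f' := fun t => J t * (W t - c / I t))
      (convex_Ioo l b)
      (fun t ht => (hg t ht).continuousAt.continuousWithinAt) (fun t ht => ?_)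
      (fun t ht => ?_) <;> rw [interior_Ioo] at ht
    · exact (hg t ht).hasDerivWithinAt
    · refine mul_nonpos_of_nonpos_of_nonneg (hJneg t ht) (sub_nonneg.2 ?_)
      exact (div_le_iff₀ (hpos t (hsub ht))).2 (by linarith [hc t (hsub ht)])
  have hs : (l + b) / 2 ∈ Ioo l b := ⟨by linarith [mem_Iio.1 hlb], by linarith [mem_Iio.1 hlb]⟩
  have hgtop : Tendsto g (𝓝[<] b) atTop := tendsto_sundman_atTop hc0 <|
    tendsto_nhdsWithin_iff.2 ⟨hIlim, by
      filter_upwards [Ioo_mem_nhdsLT hab] with t ht using hpos t ht⟩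
  obtain ⟨t, hgt, ht⟩ :=
    ((hgtop.eventually_gt_atTop (g ((l + b) / 2))).and (Ioo_mem_nhdsLT hs.2)).exists
  exact (hganti hs ⟨hs.1.trans ht.1, ht.2⟩ ht.1.le).not_gt hgt

theorem eq_zero_of_tendsto_of_sum_smul_eq_zero {α ι V : Type*} [Fintype ι] [NormedAddCommGroup V]
    [NormedSpace ℝ V] {l : Filter α} [l.NeBot] {m : ι → ℝ} {r : ι → α → V} {p : V}
    (hm : ∑ j, m j ≠ 0) (hcm : ∀ᶠ t in l, ∑ j, m j • r j t = 0) (hr : ∀ j, Tendsto (r j) l (𝓝 p)) :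
    p = 0 := by
  have hlim : Tendsto (fun t => ∑ j, m j • r j t) l (𝓝 ((∑ j, m j) • p)) := by
    rw [sum_smul]
    exact tendsto_finsetSum _ fun j _ => (hr j).const_smul (m j)
  have hsum : (∑ j, m j) • p = 0 :=
    tendsto_nhds_unique hlim (tendsto_const_nhds.congr' (hcm.mono fun _ h => h.symm))
  exact (smul_eq_zero.1 hsum).resolve_left hm

namespace NBody

variable {ι E : Type*} [Fintype ι] [NormedAddCommGroup E] (G : ℝ) (m : ι → ℝ)

section Configuration

/-- Applied to the velocities, this is twice the kinetic energy. -/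
noncomputable def momentOfInertia (x : ι → E) : ℝ := ∑ j, m j * ‖x j‖ ^ 2

noncomputable def angularMomentum (x w : ι → ℝ³) : ℝ³ := ∑ j, m j • cross (x j) (w j)

theorem momentOfInertia_pos (hm : ∀ j, 0 < m j) {x : ι → E} {j k : ι} (hjk : x j ≠ x k) :
    0 < momentOfInertia m x := by
  obtain ⟨i, hi⟩ : ∃ i, x i ≠ 0 := by
    by_contra! h
    exact hjk (by rw [h j, h k])
  exact sum_pos' (fun j _ => mul_nonneg (hm j).le (sq_nonneg _))
    ⟨i, mem_univ i, mul_pos (hm i) (pow_pos (norm_pos_iff.2 hi) 2)⟩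

theorem norm_angularMomentum_sq_le (hm : ∀ j, 0 ≤ m j) (x w : ι → ℝ³) :
    ‖angularMomentum m x w‖ ^ 2 ≤ momentOfInertia m x * momentOfInertia m w := by
  have hnorm : ‖angularMomentum m x w‖ ≤ ∑ j, m j * (‖x j‖ * ‖w j‖) := by
    refine (norm_sum_le _ _).trans (sum_le_sum fun j _ => ?_)
    rw [norm_smul, Real.norm_of_nonneg (hm j)]
    exact mul_le_mul_of_nonneg_left (norm_cross_le _ _) (hm j)
  refine (pow_le_pow_left₀ (norm_nonneg _) hnorm 2).trans
    (sum_sq_le_sum_mul_sum_of_sq_le_mul _ (fun j _ => mul_nonneg (hm j) (sq_nonneg _))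
      (fun j _ => mul_nonneg (hm j) (sq_nonneg _)) fun j _ => le_of_eq (by ring))

theorem tendsto_momentOfInertia_zero {α : Type*} {l : Filter α} {x : ι → α → E}
    (hx : ∀ j, Tendsto (x j) l (𝓝 0)) : Tendsto (fun t => momentOfInertia m (x · t)) l (𝓝 0) := by
  simpa [momentOfInertia] using
    tendsto_finsetSum univ fun j _ => ((hx j).norm.pow 2).const_mul (m j)

theorem hasDerivWithinAt_momentOfInertia [InnerProductSpace ℝ E] {s : Set ℝ} {t : ℝ}
    {x : ι → ℝ → E} {x' : ι → E} (hx : ∀ j, HasDerivWithinAt (x j) (x' j) s t) :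
    HasDerivWithinAt (fun t => momentOfInertia m (x · t)) (2 * ∑ j, m j * ⟪x j t, x' j⟫) s t := by
  refine (HasDerivWithinAt.fun_sum fun j _ => ((hx j).norm_sq).const_mul (m j)).congr_deriv ?_
  rw [mul_sum]
  exact sum_congr rfl fun j _ => by ring

end Configuration

section Newton

variable [DecidableEq ι]

/-- The force function `U`, i.e. minus the potential energy. -/
noncomputable def forceFunction (x : ι → E) : ℝ :=
  2⁻¹ * ∑ j, ∑ k ∈ univ.erase j, G * m j * m k * ‖x k - x j‖⁻¹

theorem tendsto_forceFunction_atTop {α : Type*} {l : Filter α} {x : ι → α → E} (hG : 0 < G)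
    (hm : ∀ j, 0 < m j) {j k : ι} (hjk : j ≠ k) (hx : Tendsto (fun t => x k t - x j t) l (𝓝[≠] 0)) :
    Tendsto (fun t => forceFunction G m (x · t)) l atTop := by
  have hpair : Tendsto (fun t => 2⁻¹ * (G * m j * m k * ‖x k t - x j t‖⁻¹)) l atTop :=
    ((tendsto_inv_nhdsGT_zero.comp (tendsto_norm_nhdsNE_zero.comp hx)).const_mul_atTop
      (by have := hm j; have := hm k; positivity)).const_mul_atTop (by norm_num)
  refine tendsto_atTop_mono (fun t => ?_) hpair
  have hterm : ∀ i, ∀ n ∈ univ.erase i, 0 ≤ G * m i * m n * ‖x n t - x i t‖⁻¹ := fun i n _ => by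
    have := hm i; have := hm n; positivity
  refine mul_le_mul_of_nonneg_left ?_ (by norm_num)
  exact (single_le_sum (hterm j) (mem_erase.2 ⟨hjk.symm, mem_univ k⟩)).trans
    (single_le_sum (f := fun i => ∑ n ∈ univ.erase i, G * m i * m n * ‖x n t - x i t‖⁻¹)
      (fun i _ => sum_nonneg (hterm i)) (mem_univ j))

variable [InnerProductSpace ℝ E]

noncomputable def newtonForce (x : ι → E) (j : ι) : E :=
  ∑ k ∈ univ.erase j, (G * m j * m k / ‖x k - x j‖ ^ 3) • (x k - x j)

theorem sum_inner_newtonForce (x y : ι → E) :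
    ∑ j, ⟪y j, newtonForce G m x j⟫ =
      -(2⁻¹ * ∑ j, ∑ k ∈ univ.erase j,
          G * m j * m k * ⟪y k - y j, x k - x j⟫ / ‖x k - x j‖ ^ 3) := by
  simp only [newtonForce, inner_sum, real_inner_smul_right]
  rw [sum_sum_erase_eq_half_sum_add_swap, smul_eq_mul, ← mul_neg, ← sum_neg_distrib]
  congr 1
  refine sum_congr rfl fun j _ => ?_
  rw [← sum_neg_distrib]
  refine sum_congr rfl fun k _ => ?_
  rw [norm_sub_rev (x j) (x k)]
  simp only [inner_sub_left, inner_sub_right]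
  ring

theorem sum_inner_self_newtonForce (x : ι → E) :
    ∑ j, ⟪x j, newtonForce G m x j⟫ = -forceFunction G m x := by
  rw [sum_inner_newtonForce, forceFunction]
  congr 2
  refine sum_congr rfl fun j _ => sum_congr rfl fun k _ => ?_
  rw [real_inner_self_eq_norm_sq]
  -- at a collision both sides are `0`, by the convention `x / 0 = 0`
  rcases eq_or_ne ‖x k - x j‖ 0 with h | h
  · simp [h]
  · field_simp

theorem sum_cross_newtonForce (x : ι → ℝ³) : ∑ j, cross (x j) (newtonForce G m x j) = 0 := by
  simp only [newtonForce, ← crossCLM_apply, map_sum, map_smul, map_sub]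
  rw [sum_sum_erase_eq_half_sum_add_swap]
  refine (smul_eq_zero_of_right _ (sum_eq_zero fun j _ => sum_eq_zero fun k _ => ?_))
  simp only [crossCLM_apply, cross_self_eq_zero, sub_zero]
  rw [norm_sub_rev (x k), mul_right_comm G (m k), ← smul_add, cross_add_cross_swap, smul_zero]

variable {s : Set ℝ} {t : ℝ} {x : ι → ℝ → E} {x' : ι → E}

theorem hasDerivWithinAt_forceFunction (hx : ∀ j, HasDerivWithinAt (x j) (x' j) s t)
    (hsep : Pairwise fun j k => x j t ≠ x k t) :
    HasDerivWithinAt (fun t => forceFunction G m (x · t))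
      (∑ j, ⟪x' j, newtonForce G m (x · t) j⟫) s t := by
  have hterm : ∀ j, ∀ k ∈ univ.erase j, HasDerivWithinAt
      (fun t => G * m j * m k * ‖x k t - x j t‖⁻¹)
      (G * m j * m k * (-⟪x k t - x j t, x' k - x' j⟫ / ‖x k t - x j t‖ ^ 3)) s t :=
    fun j k hk => (((hx k).sub (hx j)).inv_norm
      (sub_ne_zero.2 (hsep (ne_of_mem_erase hk)))).const_mul _
  refine ((HasDerivWithinAt.fun_sum fun j _ =>
    HasDerivWithinAt.fun_sum (hterm j)).const_mul 2⁻¹).congr_deriv ?_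
  rw [sum_inner_newtonForce, ← mul_neg, ← sum_neg_distrib]
  congr 1
  refine sum_congr rfl fun j _ => ?_
  rw [← sum_neg_distrib]
  refine sum_congr rfl fun k _ => ?_
  rw [real_inner_comm]
  ring

end Newton

structure IsSolution [DecidableEq ι] [InnerProductSpace ℝ E] (s : Set ℝ) (r v a : ι → ℝ → E) :
    Prop where
  hasDerivWithinAt_position : ∀ j, ∀ t ∈ s, HasDerivWithinAt (r j) (v j t) s t
  hasDerivWithinAt_velocity : ∀ j, ∀ t ∈ s, HasDerivWithinAt (v j) (a j t) s t
  pairwise_ne : ∀ t ∈ s, Pairwise fun j k => r j t ≠ r k t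
  newton : ∀ j, ∀ t ∈ s, m j • a j t = newtonForce G m (r · t) j

namespace IsSolution

variable {G m} [DecidableEq ι] [InnerProductSpace ℝ E] {s : Set ℝ} {t : ℝ} {r v a : ι → ℝ → E}

theorem sum_mul_inner_eq_sum_inner_newtonForce (h : IsSolution G m s r v a) (y : ι → E)
    (ht : t ∈ s) :
    ∑ j, m j * ⟪y j, a j t⟫ = ∑ j, ⟪y j, newtonForce G m (r · t) j⟫ :=
  sum_congr rfl fun j _ => by rw [← h.newton j t ht, real_inner_smul_right]

theorem hasDerivWithinAt_energy (h : IsSolution G m s r v a) (ht : t ∈ s) :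
    HasDerivWithinAt (fun t => 2⁻¹ * momentOfInertia m (v · t) - forceFunction G m (r · t))
      0 s t := by
  have hW := (hasDerivWithinAt_momentOfInertia m fun j =>
    h.hasDerivWithinAt_velocity j t ht).const_mul 2⁻¹
  have hU := hasDerivWithinAt_forceFunction G m (fun j => h.hasDerivWithinAt_position j t ht)
    (h.pairwise_ne t ht)
  refine (hW.sub hU).congr_deriv ?_
  rw [h.sum_mul_inner_eq_sum_inner_newtonForce _ ht]
  ring

theorem hasDerivWithinAt_lagrangeJacobi (h : IsSolution G m s r v a) (ht : t ∈ s) :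
    HasDerivWithinAt (fun t => 2 * ∑ j, m j * ⟪r j t, v j t⟫)
      (2 * momentOfInertia m (v · t) - 2 * forceFunction G m (r · t)) s t := by
  refine ((HasDerivWithinAt.fun_sum fun j _ => ((h.hasDerivWithinAt_position j t ht).inner ℝ
    (h.hasDerivWithinAt_velocity j t ht)).const_mul (m j)).const_mul 2).congr_deriv ?_
  have hvirial : ∑ j, m j * ⟪r j t, a j t⟫ = -forceFunction G m (r · t) := by
    rw [h.sum_mul_inner_eq_sum_inner_newtonForce _ ht, sum_inner_self_newtonForce]
  simp only [mul_add, sum_add_distrib, hvirial, real_inner_self_eq_norm_sq, momentOfInertia]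
  ring

theorem hasDerivWithinAt_angularMomentum {r v a : ι → ℝ → ℝ³} (h : IsSolution G m s r v a)
    (ht : t ∈ s) : HasDerivWithinAt (fun t => angularMomentum m (r · t) (v · t)) 0 s t := by
  refine (HasDerivWithinAt.fun_sum fun j _ => ((h.hasDerivWithinAt_position j t ht).cross
    (h.hasDerivWithinAt_velocity j t ht)).const_smul (m j)).congr_deriv ?_
  rw [← sum_cross_newtonForce G m (r · t)]
  refine sum_congr rfl fun j _ => ?_
  rw [← h.newton j t ht, cross_self_eq_zero, zero_add, ← crossCLM_apply, ← crossCLM_apply, map_smul]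

theorem angularMomentum_eq {r v a : ι → ℝ → ℝ³} (h : IsSolution G m s r v a)
    (hs : Convex ℝ s) {t t' : ℝ} (ht : t ∈ s) (ht' : t' ∈ s) :
    angularMomentum m (r · t) (v · t) = angularMomentum m (r · t') (v · t') :=
  hs.is_const_of_hasDerivWithinAt_zero (fun _ => h.hasDerivWithinAt_angularMomentum) ht ht'

theorem energy_eq (h : IsSolution G m s r v a) (hs : Convex ℝ s) {t t' : ℝ} (ht : t ∈ s)
    (ht' : t' ∈ s) :
    2⁻¹ * momentOfInertia m (v · t) - forceFunction G m (r · t) =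
      2⁻¹ * momentOfInertia m (v · t') - forceFunction G m (r · t') :=
  hs.is_const_of_hasDerivWithinAt_zero (fun _ => h.hasDerivWithinAt_energy) ht ht'

theorem angularMomentum_eq_zero_of_tendsto_zero {r v a : ι → ℝ → ℝ³} {t₀ t₁ : ℝ}
    (h : IsSolution G m (Ico t₀ t₁) r v a) (hG : 0 < G) (hm : ∀ j, 0 < m j) (ht : t₀ < t₁)
    {j k : ι} (hjk : j ≠ k) (hr : ∀ j, Tendsto (r j) (𝓝[<] t₁) (𝓝 0)) :
    angularMomentum m (r · t₀) (v · t₀) = 0 := by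
  have hS : Convex ℝ (Ico t₀ t₁) := convex_Ico t₀ t₁
  have ht₀ : t₀ ∈ Ico t₀ t₁ := left_mem_Ico.2 ht
  have hIoo : ∀ t ∈ Ioo t₀ t₁, t ∈ Ico t₀ t₁ := fun _ ht => Set.Ioo_subset_Ico_self ht
  have hnhds : ∀ t ∈ Ioo t₀ t₁, Ico t₀ t₁ ∈ 𝓝 t := fun t ht => Ico_mem_nhds ht.1 ht.2
  set E₀ := 2⁻¹ * momentOfInertia m (v · t₀) - forceFunction G m (r · t₀)
  have hE : ∀ t ∈ Ico t₀ t₁, 2⁻¹ * momentOfInertia m (v · t) - forceFunction G m (r · t) = E₀ :=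
    fun t ht => h.energy_eq hS ht ht₀
  have hU : Tendsto (fun t => forceFunction G m (r · t)) (𝓝[<] t₁) atTop :=
    tendsto_forceFunction_atTop G m hG hm hjk <| tendsto_nhdsWithin_iff.2
      ⟨by simpa using (hr k).sub (hr j), by
        filter_upwards [Ioo_mem_nhdsLT ht] with t ht
        exact sub_ne_zero.2 (h.pairwise_ne t (hIoo t ht) hjk.symm)⟩
  have hW : Tendsto (fun t => momentOfInertia m (v · t)) (𝓝[<] t₁) atTop := by
    refine ((hU.atTop_add (tendsto_const_nhds (x := E₀))).const_mul_atTop two_pos).congr' ?_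
    filter_upwards [Ioo_mem_nhdsLT ht] with t ht
    linarith [hE t (hIoo t ht)]
  have hsq := le_zero_of_lagrangeJacobi_of_tendsto_zero ht (E := E₀)
    (c := ‖angularMomentum m (r · t₀) (v · t₀)‖ ^ 2)
    (fun t ht => (hasDerivWithinAt_momentOfInertia m fun j =>
      h.hasDerivWithinAt_position j t (hIoo t ht)).hasDerivAt (hnhds t ht))
    (fun t ht => ((h.hasDerivWithinAt_lagrangeJacobi (hIoo t ht)).hasDerivAt
      (hnhds t ht)).congr_deriv (by linarith [hE t (hIoo t ht)]))
    (fun t ht => momentOfInertia_pos m hm (h.pairwise_ne t (hIoo t ht) hjk))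
    (fun t ht => by
      rw [← h.angularMomentum_eq hS (hIoo t ht) ht₀]
      exact norm_angularMomentum_sq_le m (fun j => (hm j).le) _ _)
    (tendsto_momentOfInertia_zero m hr) hW
  exact norm_eq_zero.1 ((pow_eq_zero_iff two_ne_zero).1 (le_antisymm hsq (sq_nonneg _)))

end IsSolution

end NBody

theorem sundman_weierstrass_total_collapse_general (N : ℕ) (hN : 2 ≤ N)
    (m : Fin N → ℝ) (hm : ∀ j, 0 < m j) (G : ℝ) (hG : 0 < G)
    (t₀ tstar : ℝ) (ht : t₀ < tstar)
    (r v a : Fin N → ℝ → EuclideanSpace ℝ (Fin 3))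
    (hrv : ∀ j, ∀ t ∈ Set.Ico t₀ tstar,
      HasDerivWithinAt (r j) (v j t) (Set.Ico t₀ tstar) t)
    (hva : ∀ j, ∀ t ∈ Set.Ico t₀ tstar,
      HasDerivWithinAt (v j) (a j t) (Set.Ico t₀ tstar) t)
    (hsep : ∀ t ∈ Set.Ico t₀ tstar, ∀ j k, j ≠ k → r j t ≠ r k t)
    (hNewton : ∀ j, ∀ t ∈ Set.Ico t₀ tstar,
      m j • a j t = ∑ k ∈ Finset.univ.erase j,
        (G * m j * m k / ‖r k t - r j t‖ ^ 3) • (r k t - r j t))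
    (hcm : ∀ t ∈ Set.Ico t₀ tstar, ∑ j, m j • r j t = 0)
    (p : EuclideanSpace ℝ (Fin 3))
    (hcollapse : ∀ j, Filter.Tendsto (r j) (nhdsWithin tstar (Set.Iio tstar)) (nhds p)) :
    ∀ t ∈ Set.Ico t₀ tstar, ∑ j, m j • cross (r j t) (v j t) = 0 := by
  have hsol : NBody.IsSolution G m (Ico t₀ tstar) r v a := ⟨hrv, hva, hsep, hNewton⟩
  obtain rfl : p = 0 := eq_zero_of_tendsto_of_sum_smul_eq_zero
    (sum_pos (fun j _ => hm j) ⟨⟨0, by omega⟩, mem_univ _⟩).ne'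
    (mem_of_superset (Ioo_mem_nhdsLT ht) fun t ht => hcm t (Set.Ioo_subset_Ico_self ht)) hcollapse
  have hC₀ := hsol.angularMomentum_eq_zero_of_tendsto_zero hG hm ht
    (j := ⟨0, by omega⟩) (k := ⟨1, by omega⟩) (by simp [Fin.ext_iff]) hcollapse
  exact fun t ht' =>
    (hsol.angularMomentum_eq (convex_Ico t₀ tstar) ht' (left_mem_Ico.2 ht)).trans hC₀

/-- **Sundman–Weierstrass total collapse theorem.** If a solution of the
Newtonian N-body problem (`N ≥ 2`) in the center-of-mass frame undergoes total
collapse at time `t*`, then its total angular momentum vanishes. -/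
theorem sundman_weierstrass_total_collapse (N : ℕ) (hN : 2 ≤ N)
    (m : Fin N → ℝ) (hm : ∀ j, 0 < m j) (G : ℝ) (hG : 0 < G)
    (t₀ tstar : ℝ) (ht : t₀ < tstar)
    (r v a : Fin N → ℝ → EuclideanSpace ℝ (Fin 3))
    (hrv : ∀ j, ∀ t ∈ Set.Ico t₀ tstar,
      HasDerivWithinAt (r j) (v j t) (Set.Ico t₀ tstar) t)
    (hva : ∀ j, ∀ t ∈ Set.Ico t₀ tstar,
      HasDerivWithinAt (v j) (a j t) (Set.Ico t₀ tstar) t)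
    (hacont : ∀ j, ContinuousOn (a j) (Set.Ico t₀ tstar))
    (hsep : ∀ t ∈ Set.Ico t₀ tstar, ∀ j k, j ≠ k → r j t ≠ r k t)
    (hNewton : ∀ j, ∀ t ∈ Set.Ico t₀ tstar,
      m j • a j t = ∑ k ∈ Finset.univ.erase j,
        (G * m j * m k / ‖r k t - r j t‖ ^ 3) • (r k t - r j t))
    (hcm : ∀ t ∈ Set.Ico t₀ tstar, ∑ j, m j • r j t = 0)
    (p : EuclideanSpace ℝ (Fin 3))
    (hcollapse : ∀ j, Filter.Tendsto (r j) (nhdsWithin tstar (Set.Iio tstar)) (nhds p)) :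
    ∀ t ∈ Set.Ico t₀ tstar, ∑ j, m j • cross (r j t) (v j t) = 0 :=
  sundman_weierstrass_total_collapse_general N hN m hm G hG t₀ tstar ht r v a hrv hva hsep hNewton
    hcm p hcollapse
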